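/- For every choice of the real parameters ζ₁₁, ζ₂₂, ζ₃₃, ζ₁₂, ζ₁₃, ζ₂₃, ξ₁₁, ξ₂₂, ξ₃₃, ξ₁₂, ξ₁₃, ξ₂₃ and all i, j ∈ {1,...,4}, the function η̃_{ij}(x) := h_{ij}(x)·|x|²/4 satisfies ∑_{l=1}^4 ∂_l²(η̃_{ij})(x) = −2·h_{ij}(x) for all x ∈ ℝ⁴∖{0}; equivalently, for the geometer's Laplacian Δ = −∑_{l=1}^4 ∂_l², Δη̃_{ij} = 2h_{ij}. -/

import Mathlib

/-!
Each entry `hᵢⱼ` is `Q(x) r⁻⁶` for a quadratic form `Q` with traceless coefficient matrix, i.e.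
a harmonic one. Indeed `h⁺(x) = −(2/(3r⁶)) Φ(x xᵀ)` for the linear map
`Φ(X) = ζ₁₁(2 I₁ᵀXI₁ − I₂ᵀXI₂ − I₃ᵀXI₃) + ⋯ + ζ₁₂(I₁ᵀXI₂ + I₂ᵀXI₁) + ⋯`, the quadratic form
`x ↦ Φ(x xᵀ)ᵢⱼ` has trace `Φ(1)ᵢⱼ`, and `Φ(1) = 0` because the `I_a` are skew, square to `−1`
and pairwise anticommute; `h⁻` is the conjugate of such a term by `ℛ`, and `ℛ² = 1`.
Hence `η̃ᵢⱼ = Q r⁻⁴ / 4`, and for harmonic quadratic `Q` on `ℝⁿ` one computes, with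
`Δ = ∑ₗ ∂ₗ²`, `Δ(Q r^{2m}) = 2m(n + 2m + 2) Q r^{2m−2}`, which is `−8 Q r⁻⁶` for `n = 4`, `m = −2`.
-/

open scoped BigOperators

noncomputable section

/-- Partial derivative in the `i`-th coordinate direction. -/
def pd {n : ℕ} (i : Fin n) (f : (Fin n → ℝ) → ℝ) : (Fin n → ℝ) → ℝ :=
  fun x => fderiv ℝ f x (Pi.single i 1)

/-- The complex structure `I₁` on `ℝ⁴`. -/
def I1 : Matrix (Fin 4) (Fin 4) ℝ :=
  !![0, -1, 0, 0; 1, 0, 0, 0; 0, 0, 0, -1; 0, 0, 1, 0]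

/-- The complex structure `I₂` on `ℝ⁴`. -/
def I2 : Matrix (Fin 4) (Fin 4) ℝ :=
  !![0, 0, -1, 0; 0, 0, 0, 1; 1, 0, 0, 0; 0, -1, 0, 0]

/-- The complex structure `I₃ = I₁ I₂` on `ℝ⁴`. -/
def I3 : Matrix (Fin 4) (Fin 4) ℝ := I1 * I2

/-- `α_J(x) = Jᵀ x`. -/
def alphaVec (J : Matrix (Fin 4) (Fin 4) ℝ) (x : Fin 4 → ℝ) : Fin 4 → ℝ :=
  Matrix.mulVec (Matrix.transpose J) x

/-- The outer product `A_{JK}(x) = α_J(x) · α_K(x)ᵀ`. -/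
def Amat (J K : Matrix (Fin 4) (Fin 4) ℝ) (x : Fin 4 → ℝ) : Matrix (Fin 4) (Fin 4) ℝ :=
  Matrix.vecMulVec (alphaVec J x) (alphaVec K x)

/-- The leading term `h⁺` of the expansion of an ALE metric,
`h⁺(x) = −(2/(3 r⁶)) · [ζ₁₁(2A₁₁−A₂₂−A₃₃) + ζ₂₂(2A₂₂−A₁₁−A₃₃) + ζ₃₃(2A₃₃−A₁₁−A₂₂)
          + ζ₁₂(A₁₂+A₂₁) + ζ₁₃(A₁₃+A₃₁) + ζ₂₃(A₂₃+A₃₂)]`. -/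
def hplus (ζ11 ζ22 ζ33 ζ12 ζ13 ζ23 : ℝ) (x : Fin 4 → ℝ) : Matrix (Fin 4) (Fin 4) ℝ :=
  (-(2 / (3 * (∑ i, x i ^ 2) ^ 3))) •
    (ζ11 • ((2 : ℝ) • Amat I1 I1 x - Amat I2 I2 x - Amat I3 I3 x) +
     ζ22 • ((2 : ℝ) • Amat I2 I2 x - Amat I1 I1 x - Amat I3 I3 x) +
     ζ33 • ((2 : ℝ) • Amat I3 I3 x - Amat I1 I1 x - Amat I2 I2 x) +
     ζ12 • (Amat I1 I2 x + Amat I2 I1 x) +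
     ζ13 • (Amat I1 I3 x + Amat I3 I1 x) +
     ζ23 • (Amat I2 I3 x + Amat I3 I2 x))

/-- The reflection `ℛ = diag(1,−1,−1,−1)`. -/
def Rrefl : Matrix (Fin 4) (Fin 4) ℝ := Matrix.diagonal ![1, -1, -1, -1]

/-- `h⁻(x) = ℛ · h⁺_ξ(ℛ x) · ℛ`. -/
def hminus (ξ11 ξ22 ξ33 ξ12 ξ13 ξ23 : ℝ) (x : Fin 4 → ℝ) : Matrix (Fin 4) (Fin 4) ℝ :=
  Rrefl * hplus ξ11 ξ22 ξ33 ξ12 ξ13 ξ23 (Matrix.mulVec Rrefl x) * Rrefl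

/-- `h = h⁺ + h⁻`. -/
def hfull (ζ11 ζ22 ζ33 ζ12 ζ13 ζ23 ξ11 ξ22 ξ33 ξ12 ξ13 ξ23 : ℝ)
    (x : Fin 4 → ℝ) : Matrix (Fin 4) (Fin 4) ℝ :=
  hplus ζ11 ζ22 ζ33 ζ12 ζ13 ζ23 x + hminus ξ11 ξ22 ξ33 ξ12 ξ13 ξ23 x

open Topology Matrix

section PartialDerivatives

variable {n : ℕ} {f g : (Fin n → ℝ) → ℝ} {x : Fin n → ℝ}

theorem HasFDerivAt.pd_eq {f' : (Fin n → ℝ) →L[ℝ] ℝ} (h : HasFDerivAt f f' x) (l : Fin n) :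
    pd l f x = f' (Pi.single l 1) := by
  rw [pd, h.fderiv]

theorem Filter.EventuallyEq.pd_eq (h : f =ᶠ[𝓝 x] g) (l : Fin n) : pd l f x = pd l g x := by
  rw [pd, pd, h.fderiv_eq]

theorem pd_add (hf : DifferentiableAt ℝ f x) (hg : DifferentiableAt ℝ g x) (l : Fin n) :
    pd l (fun y => f y + g y) x = pd l f x + pd l g x := by
  simp [pd, fderiv_fun_add hf hg]

theorem pd_mul (hf : DifferentiableAt ℝ f x) (hg : DifferentiableAt ℝ g x) (l : Fin n) :
    pd l (fun y => f y * g y) x = pd l f x * g x + f x * pd l g x := by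
  simp [pd, fderiv_fun_mul hf hg]; ring

theorem pd_const_mul (hf : DifferentiableAt ℝ f x) (c : ℝ) (l : Fin n) :
    pd l (fun y => c * f y) x = c * pd l f x := by
  simp [pd, fderiv_const_mul hf]

theorem pd_zpow (hf : DifferentiableAt ℝ f x) (hx : f x ≠ 0) (m : ℤ) (l : Fin n) :
    pd l (fun y => f y ^ m) x = m * f x ^ (m - 1) * pd l f x :=
  (((hasDerivAt_zpow m (f x) (.inl hx)).comp_hasFDerivAt x hf.hasFDerivAt).pd_eq l).trans
    (by simp [pd])

theorem pd_sum {ι : Type*} (s : Finset ι) {F : ι → (Fin n → ℝ) → ℝ}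
    (hF : ∀ i ∈ s, DifferentiableAt ℝ (F i) x) (l : Fin n) :
    pd l (fun y => ∑ i ∈ s, F i y) x = ∑ i ∈ s, pd l (F i) x := by
  simp [pd, fderiv_fun_sum hF]

theorem pd_apply (k l : Fin n) : pd l (fun y => y k) x = if k = l then 1 else 0 := by
  simp [(hasFDerivAt_apply k x).pd_eq l, Pi.single_apply]

end PartialDerivatives

section QuadraticForms

variable {n : ℕ} (C : Matrix (Fin n) (Fin n) ℝ) {x : Fin n → ℝ}

@[fun_prop]
theorem differentiable_mulVec : Differentiable ℝ fun y : Fin n → ℝ => C *ᵥ y := by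
  unfold mulVec dotProduct; fun_prop

@[fun_prop]
theorem differentiable_dotProduct :
    Differentiable ℝ fun p : (Fin n → ℝ) × (Fin n → ℝ) => p.1 ⬝ᵥ p.2 := by
  unfold dotProduct; fun_prop

theorem pd_mulVec_apply (k l : Fin n) : pd l (fun y => (C *ᵥ y) k) x = C k l := by
  simp only [mulVec, dotProduct]
  rw [pd_sum _ (fun q _ => by fun_prop)]
  simp [pd_const_mul (differentiableAt_apply _ _), pd_apply]

theorem pd_dotProduct_mulVec (l : Fin n) :
    pd l (fun y => y ⬝ᵥ C *ᵥ y) x = ((C + Cᵀ) *ᵥ x) l := by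
  simp only [dotProduct]
  rw [pd_sum _ (fun p _ => by fun_prop)]
  have hterm (p : Fin n) : pd l (fun y => y p * (C *ᵥ y) p) x =
      (if p = l then (C *ᵥ x) p else 0) + x p * C p l := by
    rw [pd_mul (by fun_prop) (by fun_prop), pd_apply, pd_mulVec_apply, ite_mul, one_mul, zero_mul]
  simp [hterm, Finset.sum_add_distrib, add_mulVec, mulVec_transpose, vecMul, dotProduct, mul_comm]

theorem dotProduct_add_transpose_mulVec (x : Fin n → ℝ) :
    x ⬝ᵥ (C + Cᵀ) *ᵥ x = 2 * (x ⬝ᵥ C *ᵥ x) := by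
  rw [add_mulVec, dotProduct_add, mulVec_transpose, dotProduct_comm x (x ᵥ* C),
    ← dotProduct_mulVec]
  ring

end QuadraticForms

section Laplacian

variable {n : ℕ} (C : Matrix (Fin n) (Fin n) ℝ) {x : Fin n → ℝ}

theorem sum_sq_ne_zero (hx : x ≠ 0) : ∑ k, x k ^ 2 ≠ 0 := by
  simpa [dotProduct, sq] using dotProduct_self_eq_zero.not.mpr hx

theorem pd_sum_sq (l : Fin n) : pd l (fun y => ∑ k, y k ^ 2) x = 2 * x l := by
  rw [pd_sum _ (fun k _ => by fun_prop)]
  simp only [sq, pd_mul (differentiableAt_apply _ _) (differentiableAt_apply _ _), pd_apply]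
  simp [← two_mul, mul_comm]

theorem pd_sum_sq_zpow (hx : x ≠ 0) (m : ℤ) (l : Fin n) :
    pd l (fun y => (∑ k, y k ^ 2) ^ m) x = 2 * m * x l * (∑ k, x k ^ 2) ^ (m - 1) := by
  rw [pd_zpow (f := fun y => ∑ k, y k ^ 2) (by fun_prop) (sum_sq_ne_zero hx), pd_sum_sq]; ring

theorem pd_dotProduct_mulVec_mul_zpow (hx : x ≠ 0) (m : ℤ) (l : Fin n) :
    pd l (fun y => y ⬝ᵥ C *ᵥ y * (∑ k, y k ^ 2) ^ m) x =
      ((C + Cᵀ) *ᵥ x) l * (∑ k, x k ^ 2) ^ m +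
        2 * m * (x l * (x ⬝ᵥ C *ᵥ x) * (∑ k, x k ^ 2) ^ (m - 1)) := by
  have hS := sum_sq_ne_zero hx
  rw [pd_mul (by fun_prop) (by fun_prop (disch := exact Or.inl hS)), pd_dotProduct_mulVec,
    pd_sum_sq_zpow hx]
  ring

theorem pd_pd_dotProduct_mulVec_mul_zpow (hx : x ≠ 0) (m : ℤ) (l : Fin n) :
    pd l (pd l (fun y => y ⬝ᵥ C *ᵥ y * (∑ k, y k ^ 2) ^ m)) x =
      2 * C l l * (∑ k, x k ^ 2) ^ m
        + 4 * m * (x l * ((C + Cᵀ) *ᵥ x) l) * (∑ k, x k ^ 2) ^ (m - 1)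
        + 2 * m * (x ⬝ᵥ C *ᵥ x) * (∑ k, x k ^ 2) ^ (m - 1)
        + 4 * m * (m - 1) * x l ^ 2 * (x ⬝ᵥ C *ᵥ x) * (∑ k, x k ^ 2) ^ (m - 2) := by
  have hradial (k : ℤ) : DifferentiableAt ℝ (fun y => (∑ k, y k ^ 2) ^ k) x := by
    fun_prop (disch := exact Or.inl (sum_sq_ne_zero hx))
  have hfirst : pd l (fun y => y ⬝ᵥ C *ᵥ y * (∑ k, y k ^ 2) ^ m) =ᶠ[𝓝 x] fun y =>
      ((C + Cᵀ) *ᵥ y) l * (∑ k, y k ^ 2) ^ m +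
        2 * m * (y l * (y ⬝ᵥ C *ᵥ y) * (∑ k, y k ^ 2) ^ (m - 1)) := by
    filter_upwards [eventually_ne_nhds hx] with y hy
    exact pd_dotProduct_mulVec_mul_zpow C hy m l
  rw [hfirst.pd_eq, pd_add (by fun_prop) (by fun_prop), pd_mul (by fun_prop) (by fun_prop),
    pd_const_mul (by fun_prop), pd_mul (by fun_prop) (by fun_prop),
    pd_mul (by fun_prop) (by fun_prop),
    pd_mulVec_apply, pd_sum_sq_zpow hx, pd_sum_sq_zpow hx, pd_apply, pd_dotProduct_mulVec]
  simp only [Int.cast_sub, Int.cast_one, sub_sub, one_add_one_eq_two, Matrix.add_apply,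
    transpose_apply, if_true]
  ring

theorem sum_pd_pd_dotProduct_mulVec_mul_zpow (hC : C.trace = 0) (hx : x ≠ 0) (m : ℤ) :
    ∑ l, pd l (pd l (fun y => y ⬝ᵥ C *ᵥ y * (∑ k, y k ^ 2) ^ m)) x =
      2 * m * (n + 2 * m + 2) * (x ⬝ᵥ C *ᵥ x) * (∑ k, x k ^ 2) ^ (m - 1) := by
  have hS := sum_sq_ne_zero hx
  have hdiag : ∑ l, C l l = 0 := hC
  have heuler : ∑ l, x l * ((C + Cᵀ) *ᵥ x) l = 2 * (x ⬝ᵥ C *ᵥ x) :=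
    dotProduct_add_transpose_mulVec C x
  have hpow : (∑ k, x k ^ 2) ^ (m - 1) = (∑ k, x k ^ 2) * (∑ k, x k ^ 2) ^ (m - 2) := by
    rw [← zpow_one_add₀ hS]; ring_nf
  simp only [pd_pd_dotProduct_mulVec_mul_zpow C hx, Finset.sum_add_distrib, ← Finset.sum_mul,
    ← Finset.mul_sum, hdiag, heuler, Finset.sum_const, Finset.card_univ, Fintype.card_fin,
    nsmul_eq_mul]
  rw [hpow]
  ring

end Laplacian

section CoeffMatrix

variable {ι R : Type*} [Fintype ι] [DecidableEq ι] [CommRing R] (ℓ : Matrix ι ι R →ₗ[R] R)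

def coeffMatrix : Matrix ι ι R := of fun p q => ℓ (single p q 1)

theorem map_vecMulVec (x y : ι → R) : ℓ (vecMulVec x y) = x ⬝ᵥ coeffMatrix ℓ *ᵥ y := by
  conv_lhs => rw [matrix_eq_sum_single (vecMulVec x y)]
  simp only [map_sum, dotProduct, mulVec, coeffMatrix, of_apply, Finset.mul_sum]
  refine Finset.sum_congr rfl fun p _ => Finset.sum_congr rfl fun q _ => ?_
  rw [vecMulVec_apply, ← mul_one (x p * y q), ← smul_eq_mul, ← smul_single, map_smul, smul_eq_mul]
  ring

theorem trace_coeffMatrix : (coeffMatrix ℓ).trace = ℓ 1 := by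
  conv_rhs => rw [matrix_eq_sum_single (1 : Matrix ι ι R)]
  simp only [one_apply, map_sum, trace, diag, coeffMatrix, of_apply]
  refine Finset.sum_congr rfl fun p _ => ?_
  simp [apply_ite (single p _), apply_ite ℓ, single_zero]

end CoeffMatrix

section Sandwich

variable {ι R : Type*} [Fintype ι] [DecidableEq ι] [CommRing R]

def sandwich (J K : Matrix ι ι R) : Matrix ι ι R →ₗ[R] Matrix ι ι R :=
  LinearMap.mulLeftRight R (Jᵀ, K)

variable {J K : Matrix ι ι R}

theorem sandwich_one_of_skew (hJ : Jᵀ = -J) (hJJ : J * J = -1) : sandwich J J 1 = 1 := by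
  rw [sandwich, LinearMap.mulLeftRight_apply, mul_one, hJ, neg_mul, hJJ, neg_neg]

theorem sandwich_add_sandwich_one_of_anticomm (hJ : Jᵀ = -J) (hK : Kᵀ = -K)
    (hJK : K * J = -(J * K)) : sandwich J K 1 + sandwich K J 1 = 0 := by
  simp only [sandwich, LinearMap.mulLeftRight_apply, mul_one]
  rw [hJ, hK, neg_mul, neg_mul, hJK, neg_neg, neg_add_cancel]

end Sandwich

theorem I1_transpose : I1ᵀ = -I1 := by
  ext i j; fin_cases i <;> fin_cases j <;> simp [I1]

theorem I2_transpose : I2ᵀ = -I2 := by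
  ext i j; fin_cases i <;> fin_cases j <;> simp [I2]

theorem I1_mul_I1 : I1 * I1 = -1 := by
  ext i j; fin_cases i <;> fin_cases j <;> simp [I1, mul_apply, Fin.sum_univ_four]

theorem I2_mul_I2 : I2 * I2 = -1 := by
  ext i j; fin_cases i <;> fin_cases j <;> simp [I2, mul_apply, Fin.sum_univ_four]

theorem I2_mul_I1 : I2 * I1 = -(I1 * I2) := by
  ext i j; fin_cases i <;> fin_cases j <;> simp [I1, I2, mul_apply, Fin.sum_univ_four]

theorem I3_transpose : I3ᵀ = -I3 := by
  rw [I3, transpose_mul, I1_transpose, I2_transpose, neg_mul_neg, I2_mul_I1]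

theorem I3_mul_I3 : I3 * I3 = -1 := by
  rw [I3, mul_assoc, ← mul_assoc I2, I2_mul_I1, neg_mul, mul_neg, mul_assoc, ← mul_assoc I1,
    I1_mul_I1, I2_mul_I2, neg_one_mul, neg_neg]

theorem I3_mul_I1 : I3 * I1 = -(I1 * I3) := by
  rw [I3, mul_assoc, I2_mul_I1]; noncomm_ring

theorem I3_mul_I2 : I3 * I2 = -(I2 * I3) := by
  rw [I3, ← mul_assoc, mul_assoc I1, I2_mul_I1]; noncomm_ring

theorem Amat_eq_sandwich (J K : Matrix (Fin 4) (Fin 4) ℝ) (x : Fin 4 → ℝ) :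
    Amat J K x = sandwich J K (vecMulVec x x) := by
  rw [Amat, alphaVec, alphaVec, sandwich, LinearMap.mulLeftRight_apply, mul_vecMulVec,
    vecMulVec_mul, mulVec_transpose K]

def hplusLinearMap (ζ11 ζ22 ζ33 ζ12 ζ13 ζ23 : ℝ) :
    Matrix (Fin 4) (Fin 4) ℝ →ₗ[ℝ] Matrix (Fin 4) (Fin 4) ℝ :=
  ζ11 • ((2 : ℝ) • sandwich I1 I1 - sandwich I2 I2 - sandwich I3 I3) +
  ζ22 • ((2 : ℝ) • sandwich I2 I2 - sandwich I1 I1 - sandwich I3 I3) +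
  ζ33 • ((2 : ℝ) • sandwich I3 I3 - sandwich I1 I1 - sandwich I2 I2) +
  ζ12 • (sandwich I1 I2 + sandwich I2 I1) +
  ζ13 • (sandwich I1 I3 + sandwich I3 I1) +
  ζ23 • (sandwich I2 I3 + sandwich I3 I2)

theorem hplus_eq (ζ11 ζ22 ζ33 ζ12 ζ13 ζ23 : ℝ) (x : Fin 4 → ℝ) :
    hplus ζ11 ζ22 ζ33 ζ12 ζ13 ζ23 x =
      (-(2 / (3 * (∑ i, x i ^ 2) ^ 3))) •
        hplusLinearMap ζ11 ζ22 ζ33 ζ12 ζ13 ζ23 (vecMulVec x x) := by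
  simp only [hplus, hplusLinearMap, Amat_eq_sandwich, LinearMap.add_apply, LinearMap.sub_apply,
    LinearMap.smul_apply]

theorem hplusLinearMap_one (ζ11 ζ22 ζ33 ζ12 ζ13 ζ23 : ℝ) :
    hplusLinearMap ζ11 ζ22 ζ33 ζ12 ζ13 ζ23 1 = 0 := by
  simp only [hplusLinearMap, LinearMap.add_apply, LinearMap.sub_apply, LinearMap.smul_apply,
    sandwich_one_of_skew I1_transpose I1_mul_I1, sandwich_one_of_skew I2_transpose I2_mul_I2,
    sandwich_one_of_skew I3_transpose I3_mul_I3,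
    sandwich_add_sandwich_one_of_anticomm I1_transpose I2_transpose I2_mul_I1,
    sandwich_add_sandwich_one_of_anticomm I1_transpose I3_transpose I3_mul_I1,
    sandwich_add_sandwich_one_of_anticomm I2_transpose I3_transpose I3_mul_I2]
  module

def hminusLinearMap (ξ11 ξ22 ξ33 ξ12 ξ13 ξ23 : ℝ) :
    Matrix (Fin 4) (Fin 4) ℝ →ₗ[ℝ] Matrix (Fin 4) (Fin 4) ℝ :=
  sandwich Rrefl Rrefl ∘ₗ hplusLinearMap ξ11 ξ22 ξ33 ξ12 ξ13 ξ23 ∘ₗ sandwich Rrefl Rrefl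

theorem Rrefl_transpose : Rreflᵀ = Rrefl := diagonal_transpose _

theorem Rrefl_mul_Rrefl : Rrefl * Rrefl = 1 := by
  rw [Rrefl, diagonal_mul_diagonal, ← diagonal_one]
  congr 1; ext i; fin_cases i <;> simp

theorem sum_sq_Rrefl_mulVec (x : Fin 4 → ℝ) : ∑ i, (Rrefl *ᵥ x) i ^ 2 = ∑ i, x i ^ 2 := by
  simp [Rrefl, mulVec_diagonal, Fin.sum_univ_four]

theorem hminus_eq (ξ11 ξ22 ξ33 ξ12 ξ13 ξ23 : ℝ) (x : Fin 4 → ℝ) :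
    hminus ξ11 ξ22 ξ33 ξ12 ξ13 ξ23 x =
      (-(2 / (3 * (∑ i, x i ^ 2) ^ 3))) •
        hminusLinearMap ξ11 ξ22 ξ33 ξ12 ξ13 ξ23 (vecMulVec x x) := by
  have hvv : vecMulVec (Rrefl *ᵥ x) (Rrefl *ᵥ x) = sandwich Rrefl Rrefl (vecMulVec x x) := by
    rw [sandwich, LinearMap.mulLeftRight_apply, Rrefl_transpose, mul_vecMulVec, vecMulVec_mul,
      ← mulVec_transpose, Rrefl_transpose]
  rw [hminus, hplus_eq, sum_sq_Rrefl_mulVec, hvv]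
  simp only [hminusLinearMap, LinearMap.comp_apply, sandwich, LinearMap.mulLeftRight_apply,
    Rrefl_transpose, Matrix.mul_smul, Matrix.smul_mul]

theorem hminusLinearMap_one (ξ11 ξ22 ξ33 ξ12 ξ13 ξ23 : ℝ) :
    hminusLinearMap ξ11 ξ22 ξ33 ξ12 ξ13 ξ23 1 = 0 := by
  simp [hminusLinearMap, sandwich, Rrefl_transpose, Rrefl_mul_Rrefl, hplusLinearMap_one]

def hfullCoeff (ζ11 ζ22 ζ33 ζ12 ζ13 ζ23 ξ11 ξ22 ξ33 ξ12 ξ13 ξ23 : ℝ) (i j : Fin 4) :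
    Matrix (Fin 4) (Fin 4) ℝ :=
  coeffMatrix (entryLinearMap ℝ ℝ i j ∘ₗ
    (hplusLinearMap ζ11 ζ22 ζ33 ζ12 ζ13 ζ23 + hminusLinearMap ξ11 ξ22 ξ33 ξ12 ξ13 ξ23))

theorem trace_hfullCoeff (ζ11 ζ22 ζ33 ζ12 ζ13 ζ23 ξ11 ξ22 ξ33 ξ12 ξ13 ξ23 : ℝ) (i j : Fin 4) :
    (hfullCoeff ζ11 ζ22 ζ33 ζ12 ζ13 ζ23 ξ11 ξ22 ξ33 ξ12 ξ13 ξ23 i j).trace = 0 := by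
  simp [hfullCoeff, trace_coeffMatrix, hplusLinearMap_one, hminusLinearMap_one]

theorem hfull_apply (ζ11 ζ22 ζ33 ζ12 ζ13 ζ23 ξ11 ξ22 ξ33 ξ12 ξ13 ξ23 : ℝ) (i j : Fin 4)
    (y : Fin 4 → ℝ) :
    hfull ζ11 ζ22 ζ33 ζ12 ζ13 ζ23 ξ11 ξ22 ξ33 ξ12 ξ13 ξ23 y i j =
      -(2 / 3) * (y ⬝ᵥ hfullCoeff ζ11 ζ22 ζ33 ζ12 ζ13 ζ23 ξ11 ξ22 ξ33 ξ12 ξ13 ξ23 i j *ᵥ y) *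
        (∑ k, y k ^ 2) ^ (-3 : ℤ) := by
  rw [hfull, hplus_eq, hminus_eq, ← smul_add, hfullCoeff, ← map_vecMulVec, LinearMap.comp_apply,
    LinearMap.add_apply, entryLinearMap_apply, Matrix.smul_apply, smul_eq_mul, _root_.zpow_neg,
    zpow_ofNat]
  ring

/-- The function `η̃ᵢⱼ(x) = hᵢⱼ(x)·|x|²/4` satisfies `∑ₗ ∂ₗ² η̃ᵢⱼ = −2 hᵢⱼ` on `ℝ⁴ ∖ {0}`;
i.e. for the geometer's Laplacian `Δ = −∑ₗ ∂ₗ²` we have `Δ η̃ᵢⱼ = 2 hᵢⱼ`. -/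
theorem laplacian_etaTilde
    (ζ11 ζ22 ζ33 ζ12 ζ13 ζ23 ξ11 ξ22 ξ33 ξ12 ξ13 ξ23 : ℝ) (i j : Fin 4)
    (x : Fin 4 → ℝ) (hx : x ≠ 0) :
    ∑ l, pd l (pd l
        (fun y => hfull ζ11 ζ22 ζ33 ζ12 ζ13 ζ23 ξ11 ξ22 ξ33 ξ12 ξ13 ξ23 y i j *
          (∑ m, y m ^ 2) / 4)) x
      = -2 * hfull ζ11 ζ22 ζ33 ζ12 ζ13 ζ23 ξ11 ξ22 ξ33 ξ12 ξ13 ξ23 x i j := by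
  set C := (-(1 / 6) : ℝ) • hfullCoeff ζ11 ζ22 ζ33 ζ12 ζ13 ζ23 ξ11 ξ22 ξ33 ξ12 ξ13 ξ23 i j
    with hC
  have htrace : C.trace = 0 := by rw [hC, trace_smul, trace_hfullCoeff, smul_zero]
  have hη : (fun y => hfull ζ11 ζ22 ζ33 ζ12 ζ13 ζ23 ξ11 ξ22 ξ33 ξ12 ξ13 ξ23 y i j *
      (∑ m, y m ^ 2) / 4) = fun y => y ⬝ᵥ C *ᵥ y * (∑ k, y k ^ 2) ^ (-2 : ℤ) := by
    funext y
    rw [hfull_apply, hC, smul_mulVec, dotProduct_smul, smul_eq_mul]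
    -- at `y = 0` both sides are junk zeros, as `(0 : ℝ) ^ k = 0` for `k < 0`
    rcases eq_or_ne (∑ k, y k ^ 2) 0 with hy | hy
    · simp [hy]
    · rw [show (-2 : ℤ) = -3 + 1 by norm_num, zpow_add_one₀ hy]; ring
  rw [hη, sum_pd_pd_dotProduct_mulVec_mul_zpow C htrace hx, hfull_apply, hC, smul_mulVec,
    dotProduct_smul, smul_eq_mul]
  norm_num
  ring
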